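/- arXiv:2501.08323 — 3 statements merged into one kernel-verified Lean document; each statement's English description precedes it below -/
import Mathlib

section
/- Let δ₂ > 1, d ∈ (0,1), r > 0, C₆ > 0, and let (I_k)_{k≥1} be nonnegative reals. Suppose there is A > 0 such that for all k ≥ 1: (i) I_k ≤ A·2^{k/2}; (ii) I_k ≤ A·2^{k/2}(d·2^{kδ₂})^{−1/2}; and (iii) I_k ≤ A·2^{−k/2}·r^{−1} whenever 2^k ≤ C₆·(r/d)^{1/(δ₂−1)}. If d^{1/δ₂}/C₆ ≤ r, then ∑_{k=1}^∞ I_k ≤ C·r^{−1/2} for a constant C depending only on A, δ₂, C₆. -/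
open Finset

private lemma aux_pow (β : ℝ) (k : ℕ) :
    ((2:ℝ) ^ (-β)) ^ k = (2:ℝ) ^ (-((k:ℝ) * β)) := by
  rw [← Real.rpow_natCast ((2:ℝ) ^ (-β)) k, ← Real.rpow_mul (by norm_num)]
  ring_nf

private lemma aux_lt_one {β : ℝ} (hβ : 0 < β) : (2:ℝ) ^ (-β) < 1 :=
  Real.rpow_lt_one_of_one_lt_of_neg one_lt_two (by linarith)

private lemma aux_tsum (β : ℝ) (hβ : 0 < β) :
    ∑' k : ℕ, ((2:ℝ) ^ (-β)) ^ k = (1 - (2:ℝ) ^ (-β))⁻¹ :=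
  tsum_geometric_of_lt_one (Real.rpow_pos_of_pos two_pos _).le (aux_lt_one hβ)

private lemma geom_head (m : ℕ) :
    ∑ k ∈ Finset.range m, (2:ℝ) ^ (((k:ℝ)+1)/2)
      ≤ (2:ℝ) ^ ((m:ℝ)/2) * (1 - (2:ℝ) ^ (-(1/2) : ℝ))⁻¹ := by
  have hs1 : (1:ℝ) < (2:ℝ) ^ ((1:ℝ)/2) :=
    Real.one_lt_rpow_iff_of_pos two_pos |>.mpr (Or.inl ⟨one_lt_two, by norm_num⟩)
  have hsinv : (2:ℝ) ^ (-(1/2) : ℝ) = ((2:ℝ) ^ ((1:ℝ)/2))⁻¹ := by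
    rw [← Real.rpow_neg (by norm_num : (0:ℝ) ≤ 2)]
  set s := (2:ℝ) ^ ((1:ℝ)/2) with hs
  have hc : (1 - (2:ℝ) ^ (-(1/2) : ℝ))⁻¹ * (s - 1) = s := by
    rw [hsinv]
    have hs0 : s ≠ 0 := by positivity
    have : (1 - s⁻¹) = (s - 1) / s := by field_simp
    rw [this, inv_div, div_mul_eq_mul_div, div_eq_iff (by linarith)]
    try ring
  set c := (1 - (2:ℝ) ^ (-(1/2) : ℝ))⁻¹ with hcdef
  induction m with
  | zero =>
    simp only [Finset.range_zero, Finset.sum_empty, Nat.cast_zero, zero_div, Real.rpow_zero,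
      one_mul]
    nlinarith
  | succ m ih =>
    rw [Finset.sum_range_succ]
    push_cast
    have h1 : (2:ℝ) ^ (((m:ℝ)+1)/2) = (2:ℝ) ^ ((m:ℝ)/2) * s := by
      rw [hs, ← Real.rpow_add two_pos]; ring_nf
    have ht : (0:ℝ) < (2:ℝ) ^ ((m:ℝ)/2) := Real.rpow_pos_of_pos two_pos _
    rw [h1]
    nlinarith [ih]

set_option maxHeartbeats 1000000 in
theorem dyadic_sum_cases_two_three (A δ₂ C₆ : ℝ) (hA : 0 < A) (hδ : 1 < δ₂) (hC₆ : 0 < C₆) :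
    ∃ C > (0 : ℝ), ∀ (I : ℕ → ℝ) (d r : ℝ), 0 < d → d < 1 → 0 < r →
      (∀ k : ℕ, 1 ≤ k → 0 ≤ I k) →
      (∀ k : ℕ, 1 ≤ k → I k ≤ A * (2 : ℝ) ^ ((k : ℝ) / 2)) →
      (∀ k : ℕ, 1 ≤ k →
        I k ≤ A * (2 : ℝ) ^ ((k : ℝ) / 2) * (d * (2 : ℝ) ^ ((k : ℝ) * δ₂)) ^ (-(1 / 2) : ℝ)) →
      (∀ k : ℕ, 1 ≤ k → (2 : ℝ) ^ k ≤ C₆ * (r / d) ^ (1 / (δ₂ - 1)) →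
        I k ≤ A * (2 : ℝ) ^ (-((k : ℝ) / 2)) * r⁻¹) →
      d ^ (1 / δ₂) / C₆ ≤ r →
      ∑' k : ℕ, I (k + 1) ≤ C * r ^ (-(1 / 2) : ℝ) := by
  set α : ℝ := (δ₂ - 1) / 2 with hαdef
  have hα : 0 < α := by simp [hαdef]; linarith
  set c : ℝ := (1 - (2:ℝ) ^ (-(1/2) : ℝ))⁻¹ with hcdef
  set cα : ℝ := (1 - (2:ℝ) ^ (-α))⁻¹ with hcαdef
  have hc0 : 0 < c := by
    rw [hcdef]
    have := aux_lt_one (show (0:ℝ) < 1/2 by norm_num)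
    rw [inv_pos]; linarith
  have hcα0 : 0 < cα := by
    rw [hcαdef]
    have := aux_lt_one hα
    rw [inv_pos]; linarith
  refine ⟨2 * A * c + A * C₆ ^ (-α) * cα, by positivity, ?_⟩
  intro I d r hd hd1 hr hI0 hi hii hiii hdr
  set M : ℝ := C₆ * (r / d) ^ (1 / (δ₂ - 1)) with hMdef
  have hM : 0 < M := by
    rw [hMdef]
    exact mul_pos hC₆ (Real.rpow_pos_of_pos (div_pos hr hd) _)
  set P : ℕ → ℝ := fun k =>
    min (A * (2:ℝ) ^ ((((k+1:ℕ)):ℝ) / 2)) (A * (2:ℝ) ^ (-((((k+1:ℕ)):ℝ) / 2)) * r⁻¹) with hPdef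
  set Q : ℕ → ℝ := fun k =>
    if (2:ℝ) ^ (k+1) ≤ M then 0
    else A * d ^ (-(1/2) : ℝ) * (2:ℝ) ^ (-((((k+1:ℕ)):ℝ) * α)) with hQdef
  have hP0 : ∀ k, 0 ≤ P k := by
    intro k
    apply le_min
    · positivity
    · positivity
  have hQ0 : ∀ k, 0 ≤ Q k := by
    intro k
    rw [hQdef]
    dsimp only
    split
    · exact le_refl 0
    · positivity
  have hfun : ∀ (β t : ℝ), (fun k:ℕ => (2:ℝ)^(-(((k:ℝ)+t) * β)))
      = (fun k:ℕ => (2:ℝ)^(-(t*β)) * ((2:ℝ)^(-β))^k) := by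
    intro β t; funext k; rw [aux_pow, ← Real.rpow_add two_pos]; ring_nf
  have hsum : ∀ (β t : ℝ), 0 < β → Summable (fun k:ℕ => (2:ℝ)^(-(((k:ℝ)+t) * β))) := by
    intro β t hβ
    rw [hfun]
    exact (summable_geometric_of_lt_one (by positivity) (aux_lt_one hβ)).mul_left _
  have htsum : ∀ (β t : ℝ), 0 < β →
      ∑' k:ℕ, (2:ℝ)^(-(((k:ℝ)+t) * β)) = (2:ℝ)^(-(t*β)) * (1 - (2:ℝ)^(-β))⁻¹ := by
    intro β t hβ
    rw [hfun, tsum_mul_left, aux_tsum β hβ]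
  -- pointwise bound
  have hpt : ∀ k : ℕ, I (k+1) ≤ P k + Q k := by
    intro k
    by_cases hcase : (2:ℝ) ^ (k+1) ≤ M
    · have hQz : Q k = 0 := if_pos hcase
      rw [hQz, add_zero, hPdef]
      exact le_min (hi (k+1) (by omega)) (hiii (k+1) (by omega) hcase)
    · have hQv : Q k = A * d ^ (-(1/2) : ℝ) * (2:ℝ) ^ (-((((k+1:ℕ)):ℝ) * α)) := if_neg hcase
      have hkey : A * (2:ℝ) ^ ((((k+1:ℕ)):ℝ)/2)
            * (d * (2:ℝ) ^ ((((k+1:ℕ)):ℝ) * δ₂)) ^ (-(1/2) : ℝ)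
          = A * d ^ (-(1/2) : ℝ) * (2:ℝ) ^ (-((((k+1:ℕ)):ℝ) * α)) := by
        set x : ℝ := (((k+1:ℕ)):ℝ) with hx
        have h1 : (d * (2:ℝ)^(x*δ₂)) ^ (-(1/2):ℝ)
            = d ^ (-(1/2):ℝ) * ((2:ℝ)^(x*δ₂)) ^ (-(1/2):ℝ) :=
          Real.mul_rpow hd.le (Real.rpow_pos_of_pos two_pos _).le
        have h2 : ((2:ℝ)^(x*δ₂)) ^ (-(1/2):ℝ) = (2:ℝ) ^ (x*δ₂ * (-(1/2))) :=
          (Real.rpow_mul (by norm_num) _ _).symm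
        rw [h1, h2, show -(x*α) = x/2 + x*δ₂*(-(1/2)) by rw [hαdef]; ring,
          Real.rpow_add two_pos]
        ring
      calc I (k+1) ≤ _ := hii (k+1) (by omega)
        _ = Q k := by rw [hQv, ← hkey]
        _ ≤ P k + Q k := le_add_of_nonneg_left (hP0 k)
  -- geometric majorants
  have hPle : ∀ k : ℕ, P k ≤ (A * r⁻¹) * (2:ℝ)^(-(((k:ℝ)+1) * (1/2))) := by
    intro k
    refine (min_le_right _ _).trans_eq ?_
    have h : -((((k+1:ℕ)):ℝ)/2) = -(((k:ℝ)+1) * (1/2)) := by push_cast; ring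
    rw [h]; ring
  have hQle : ∀ k : ℕ, Q k ≤ (A * d ^ (-(1/2):ℝ)) * (2:ℝ)^(-(((k:ℝ)+1) * α)) := by
    intro k
    rw [hQdef]; dsimp only
    split
    · positivity
    · apply le_of_eq
      have h : (((k+1:ℕ)):ℝ) = (k:ℝ)+1 := by push_cast; ring
      rw [h]
  have hPsum : Summable P := by
    refine Summable.of_nonneg_of_le hP0 hPle ?_
    have := (hsum (1/2) 1 (by norm_num)).mul_left (A * r⁻¹)
    simpa using this
  have hQsum : Summable Q := by
    refine Summable.of_nonneg_of_le hQ0 hQle ?_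
    have := (hsum α 1 hα).mul_left (A * d ^ (-(1/2):ℝ))
    simpa using this
  have hJsum : Summable (fun k:ℕ => I (k+1)) :=
    Summable.of_nonneg_of_le (fun k => hI0 (k+1) (by omega)) hpt (hPsum.add hQsum)
  have hstep1 : ∑' k:ℕ, I (k+1) ≤ (∑' k, P k) + ∑' k, Q k := by
    rw [← Summable.tsum_add hPsum hQsum]
    exact Summable.tsum_le_tsum hpt hJsum (hPsum.add hQsum)
  -- bound on tsum P
  obtain ⟨m₀, hm₀⟩ := pow_unbounded_of_one_lt (r⁻¹) (one_lt_two (α := ℝ))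
  have hPm : ∃ m : ℕ, r⁻¹ < (2:ℝ)^(m+1) :=
    ⟨m₀, hm₀.trans_le (pow_le_pow_right₀ one_le_two (Nat.le_succ _))⟩
  set m := Nat.find hPm with hmdef
  have hmspec : r⁻¹ < (2:ℝ)^(m+1) := Nat.find_spec hPm
  have hhead : ∑ k ∈ Finset.range m, P k ≤ A * c * r ^ (-(1/2):ℝ) := by
    rcases Nat.eq_zero_or_pos m with hm0 | hm0
    · rw [hm0]
      simp only [Finset.range_zero, Finset.sum_empty]
      positivity
    · have hle : (2:ℝ)^(m:ℕ) ≤ r⁻¹ := by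
        have := Nat.find_min hPm (show m - 1 < m from Nat.sub_lt hm0 one_pos)
        rw [Nat.sub_add_cancel hm0] at this
        exact not_lt.mp this
      have h3 : (2:ℝ)^((m:ℝ)/2) ≤ r ^ (-(1/2):ℝ) := by
        have e1 : (2:ℝ)^((m:ℝ)/2) = ((2:ℝ)^(m:ℕ)) ^ ((1:ℝ)/2) := by
          rw [← Real.rpow_natCast 2 m, ← Real.rpow_mul (by norm_num)]
          ring_nf
        have e2 : r ^ (-(1/2):ℝ) = (r⁻¹) ^ ((1:ℝ)/2) := by
          rw [Real.rpow_neg hr.le, ← Real.inv_rpow hr.le]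
        rw [e1, e2]
        exact Real.rpow_le_rpow (by positivity) hle (by norm_num)
      have h1 : ∑ k ∈ Finset.range m, P k
          ≤ ∑ k ∈ Finset.range m, A * (2:ℝ)^(((k:ℝ)+1)/2) := by
        refine Finset.sum_le_sum (fun k _ => ?_)
        refine (min_le_left _ _).trans_eq ?_
        push_cast; ring_nf
      have h2 : ∑ k ∈ Finset.range m, A * (2:ℝ)^(((k:ℝ)+1)/2)
          = A * ∑ k ∈ Finset.range m, (2:ℝ)^(((k:ℝ)+1)/2) := by
        rw [Finset.mul_sum]
      have h4 := geom_head m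
      rw [← hcdef] at h4
      calc ∑ k ∈ Finset.range m, P k
          ≤ A * ∑ k ∈ Finset.range m, (2:ℝ)^(((k:ℝ)+1)/2) := by rw [← h2]; exact h1
        _ ≤ A * ((2:ℝ)^((m:ℝ)/2) * c) := mul_le_mul_of_nonneg_left h4 hA.le
        _ ≤ A * (r ^ (-(1/2):ℝ) * c) := by
            have := mul_le_mul_of_nonneg_right h3 hc0.le
            nlinarith
        _ = A * c * r ^ (-(1/2):ℝ) := by ring
  have htail : ∑' j:ℕ, P (j + m) ≤ A * c * r ^ (-(1/2):ℝ) := by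
    have hsm : Summable (fun j:ℕ => P (j + m)) := (summable_nat_add_iff m).mpr hPsum
    have hb : ∀ j:ℕ, P (j+m) ≤ (A * r⁻¹) * (2:ℝ)^(-(((j:ℝ)+((m:ℝ)+1)) * (1/2))) := by
      intro j
      refine (hPle (j+m)).trans_eq ?_
      have h : (-(((((j+m:ℕ)):ℝ)+1) * (1/2))) = -(((j:ℝ)+((m:ℝ)+1)) * (1/2)) := by
        push_cast; ring
      rw [h]
    have hmaj : Summable (fun j:ℕ => (A * r⁻¹) * (2:ℝ)^(-(((j:ℝ)+((m:ℝ)+1)) * (1/2)))) :=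
      (hsum (1/2) ((m:ℝ)+1) (by norm_num)).mul_left _
    have h5 := Summable.tsum_le_tsum hb hsm hmaj
    rw [tsum_mul_left, htsum (1/2) ((m:ℝ)+1) (by norm_num)] at h5
    rw [← hcdef] at h5
    have h6 : (2:ℝ)^(-((((m:ℝ)+1)) * (1/2))) ≤ r ^ ((1:ℝ)/2) := by
      have hlt : (((2:ℝ)^(m+1:ℕ)))⁻¹ ≤ r := by
        rw [inv_le_comm₀ (by positivity) hr]
        exact hmspec.le
      have e1 : (2:ℝ)^(-((((m:ℝ)+1)) * (1/2))) = (((2:ℝ)^(m+1:ℕ))⁻¹) ^ ((1:ℝ)/2) := by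
        rw [← Real.rpow_natCast 2 (m+1), ← Real.rpow_neg (by norm_num : (0:ℝ) ≤ 2),
          ← Real.rpow_mul (by norm_num : (0:ℝ) ≤ 2)]
        congr 1
        push_cast; ring
      rw [e1]
      exact Real.rpow_le_rpow (by positivity) hlt (by norm_num)
    have h7 : A * r⁻¹ * ((2:ℝ)^(-((((m:ℝ)+1)) * (1/2))) * c) ≤ A * r⁻¹ * (r ^ ((1:ℝ)/2) * c) :=
      mul_le_mul_of_nonneg_left (mul_le_mul_of_nonneg_right h6 hc0.le) (by positivity)
    have h8 : A * r⁻¹ * (r ^ ((1:ℝ)/2) * c) = A * c * r ^ (-(1/2):ℝ) := by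
      rw [show r⁻¹ = r ^ (-1:ℝ) by rw [Real.rpow_neg_one],
        show r ^ (-(1/2):ℝ) = r ^ (-1 + (1:ℝ)/2) by norm_num,
        Real.rpow_add hr]
      ring
    calc ∑' j:ℕ, P (j + m) ≤ _ := h5
      _ ≤ _ := h7
      _ = _ := h8
  have hPbound : ∑' k:ℕ, P k ≤ 2 * A * c * r ^ (-(1/2):ℝ) := by
    rw [← Summable.sum_add_tsum_nat_add m hPsum]
    linarith [hhead, htail]
  -- bound on tsum Q
  obtain ⟨n₀, hn₀⟩ := pow_unbounded_of_one_lt M (one_lt_two (α := ℝ))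
  have hQn : ∃ n : ℕ, M < (2:ℝ)^(n+1) :=
    ⟨n₀, hn₀.trans_le (pow_le_pow_right₀ one_le_two (Nat.le_succ _))⟩
  set n := Nat.find hQn with hndef
  have hnspec : M < (2:ℝ)^(n+1) := Nat.find_spec hQn
  have hQbound : ∑' k:ℕ, Q k ≤ A * C₆ ^ (-α) * cα * r ^ (-(1/2):ℝ) := by
    rw [← Summable.sum_add_tsum_nat_add n hQsum]
    have hQhead : ∑ k ∈ Finset.range n, Q k = 0 := by
      refine Finset.sum_eq_zero (fun k hk => ?_)
      rw [hQdef]; dsimp only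
      rw [if_pos (not_lt.mp (Nat.find_min hQn (Finset.mem_range.mp hk)))]
    rw [hQhead, zero_add]
    have hsn : Summable (fun j:ℕ => Q (j + n)) := (summable_nat_add_iff n).mpr hQsum
    have hb : ∀ j:ℕ, Q (j+n) ≤ (A * d ^ (-(1/2):ℝ)) * (2:ℝ)^(-(((j:ℝ)+((n:ℝ)+1)) * α)) := by
      intro j
      refine (hQle (j+n)).trans_eq ?_
      have h : (-(((((j+n:ℕ)):ℝ)+1) * α)) = -(((j:ℝ)+((n:ℝ)+1)) * α) := by push_cast; ring
      rw [h]
    have hmaj : Summable (fun j:ℕ => (A * d ^ (-(1/2):ℝ)) * (2:ℝ)^(-(((j:ℝ)+((n:ℝ)+1)) * α))) :=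
      (hsum α ((n:ℝ)+1) hα).mul_left _
    have h5 := Summable.tsum_le_tsum hb hsn hmaj
    rw [tsum_mul_left, htsum α ((n:ℝ)+1) hα] at h5
    rw [← hcαdef] at h5
    have h6 : (2:ℝ)^(-((((n:ℝ)+1)) * α)) ≤ M ^ (-α) := by
      have e1 : (2:ℝ)^(-((((n:ℝ)+1)) * α)) = ((2:ℝ)^(n+1:ℕ)) ^ (-α) := by
        rw [← Real.rpow_natCast 2 (n+1), ← Real.rpow_mul (by norm_num)]
        push_cast; ring_nf
      rw [e1]
      exact Real.rpow_le_rpow_of_nonpos hM hnspec.le (by linarith)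
    have hMα : d ^ (-(1/2):ℝ) * M ^ (-α) = C₆ ^ (-α) * r ^ (-(1/2):ℝ) := by
      rw [hMdef, Real.mul_rpow hC₆.le (Real.rpow_pos_of_pos (div_pos hr hd) _).le,
        ← Real.rpow_mul (div_pos hr hd).le]
      have hne : δ₂ - 1 ≠ 0 := by linarith
      have he : (1 / (δ₂ - 1)) * (-α) = -(1/2) := by
        rw [hαdef]; field_simp
      rw [he, Real.div_rpow hr.le hd.le]
      have hdne : d ^ (-(1/2):ℝ) ≠ 0 := (Real.rpow_pos_of_pos hd _).ne'
      field_simp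
      try ring
    have h7 : (A * d ^ (-(1/2):ℝ)) * ((2:ℝ)^(-((((n:ℝ)+1)) * α)) * cα)
        ≤ (A * d ^ (-(1/2):ℝ)) * (M ^ (-α) * cα) := by
      have h0 : (0:ℝ) ≤ A * d ^ (-(1/2):ℝ) := by
        have := Real.rpow_pos_of_pos hd (-(1/2):ℝ)
        positivity
      exact mul_le_mul_of_nonneg_left (mul_le_mul_of_nonneg_right h6 hcα0.le) h0
    have h8 : (A * d ^ (-(1/2):ℝ)) * (M ^ (-α) * cα) = A * C₆ ^ (-α) * cα * r ^ (-(1/2):ℝ) := by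
      rw [show (A * d ^ (-(1/2):ℝ)) * (M ^ (-α) * cα)
        = A * cα * (d ^ (-(1/2):ℝ) * M ^ (-α)) by ring, hMα]
      ring
    linarith [h5, h7]
  calc ∑' k:ℕ, I (k+1) ≤ (∑' k, P k) + ∑' k, Q k := hstep1
    _ ≤ 2 * A * c * r ^ (-(1/2):ℝ) + A * C₆ ^ (-α) * cα * r ^ (-(1/2):ℝ) :=
        add_le_add hPbound hQbound
    _ = (2 * A * c + A * C₆ ^ (-α) * cα) * r ^ (-(1/2):ℝ) := by ring
end

section
/- Fix a > 1, Q > 0, and s > 0. For N ∈ ℕ and ξ ∈ [−1,1] define θ_N(ξ) = N^{1/2}·ξ·s − N·s + t_N · ((N − N^{1/2}ξ)² + Q²/4)^{a/2}, where t_N = s/(a·N^{a−1}). Then θ_N(ξ) = ((a−1)/2)·s·ξ² + c_N + E_N(ξ), where c_N does not depend on ξ and |E_N(ξ)| ≤ C·N^{−1/2} for all ξ ∈ [−1,1] and all sufficiently large N, with C depending only on a, Q, s. -/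
/-!
Put `m = √N` and `x = phaseDeviation Q m ξ`. Then `(N - mξ)² + Q²/4 = N²(1 + x)` and
`t_N N^a = s N / a`, so the last term of the phase is `(s/a) m² (1 + x)^(a/2)`. Expanding
`(1 + x)^(a/2)` to second order, the first-order term `(s/2) m² x` cancels `mξs` up to
`sξ²/2` and a constant, while the second-order term `s(a-2)/8 · m² x²` is `s(a-2)ξ²/2` up to
`O(1/m)`, because `m x = -2ξ + O(1/m)`. Since `x = O(1/m)`, the cubic Taylor remainder
contributes `m² · O(|x|³) = O(1/m)`.
-/

open Real Filter Topology Asymptotics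

theorem Ring.choose_two_eq {K : Type*} [Field K] [CharZero K] (r : K) :
    Ring.choose r 2 = r * (r - 1) / 2 := by
  rw [Ring.choose_eq_smul]
  simp only [descPochhammer_succ_right, Nat.cast_one, Polynomial.smeval_mul,
    Polynomial.smeval_X, Polynomial.smeval_sub, Polynomial.smeval_one]
  simp
  ring

noncomputable def binomialRemainder (p x : ℝ) : ℝ :=
  (1 + x) ^ p - (1 + p * x + p * (p - 1) / 2 * x ^ 2)

theorem binomialRemainder_isBigO (p : ℝ) :
    binomialRemainder p =O[𝓝 0] fun x => |x| ^ 3 := by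
  have h := Real.one_add_rpow_hasFPowerSeriesAt_zero (a := p) |>.isBigO_sub_partialSum_pow 3
  simp only [zero_add, FormalMultilinearSeries.partialSum, binomialSeries,
    FormalMultilinearSeries.apply_eq_prod_smul_coeff, Finset.prod_const, Finset.card_univ,
    Fintype.card_fin, FormalMultilinearSeries.coeff_ofScalars, smul_eq_mul, Finset.sum_range_succ,
    Finset.range_one, Finset.sum_singleton, pow_zero, Ring.choose_zero_right', mul_one, pow_one,
    Ring.choose_one_right', Ring.choose_two_eq, norm_eq_abs] at h
  refine h.congr_left fun x => ?_
  simp only [binomialRemainder]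
  ring

theorem exists_abs_binomialRemainder_le (p : ℝ) :
    ∃ K δ : ℝ, 0 ≤ K ∧ 0 < δ ∧
      ∀ x, |x| < δ → |binomialRemainder p x| ≤ K * |x| ^ 3 := by
  obtain ⟨K, hK, hO⟩ := (binomialRemainder_isBigO p).exists_pos
  obtain ⟨δ, hδ, hbound⟩ := Metric.eventually_nhds_iff.mp hO.bound
  refine ⟨K, δ, hK.le, hδ, fun x hx => ?_⟩
  simpa using hbound (by simpa using hx)

/-- With `m = N^{1/2}`, the paper's `(N - N^{1/2}ξ)² + Q²/4 = N² (1 + phaseDeviation Q m ξ)`. -/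
noncomputable def phaseDeviation (Q m ξ : ℝ) : ℝ :=
  -2 * ξ / m + ξ ^ 2 / m ^ 2 + Q ^ 2 / (4 * m ^ 4)

section PhaseDeviation

variable {Q m ξ : ℝ}

theorem sq_sub_add_eq_mul_one_add_phaseDeviation (hm : m ≠ 0) :
    (m ^ 2 - m * ξ) ^ 2 + Q ^ 2 / 4 = m ^ 4 * (1 + phaseDeviation Q m ξ) := by
  unfold phaseDeviation
  field_simp
  ring

theorem mul_phaseDeviation_add (hm : m ≠ 0) :
    m * phaseDeviation Q m ξ + 2 * ξ = ξ ^ 2 / m + Q ^ 2 / (4 * m ^ 3) := by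
  unfold phaseDeviation
  field_simp
  ring

theorem abs_mul_phaseDeviation_add_le (hm : 1 ≤ m) (hξ : |ξ| ≤ 1) :
    |m * phaseDeviation Q m ξ + 2 * ξ| ≤ (1 + Q ^ 2 / 4) / m := by
  have hm0 : 0 < m := by linarith
  rw [mul_phaseDeviation_add hm0.ne', abs_of_nonneg (by positivity), add_div]
  apply add_le_add
  · gcongr
    nlinarith [abs_mul_abs_self ξ, abs_nonneg ξ]
  · rw [div_div]
    exact div_le_div_of_nonneg_left (sq_nonneg Q) (by positivity)
      (by nlinarith [le_self_pow₀ hm (show 3 ≠ 0 by norm_num)])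

theorem abs_phaseDeviation_le (hm : 1 ≤ m) (hξ : |ξ| ≤ 1) :
    |phaseDeviation Q m ξ| ≤ (3 + Q ^ 2 / 4) / m := by
  have hm0 : 0 < m := by linarith
  have hr := abs_mul_phaseDeviation_add_le (Q := Q) hm hξ
  have hr' : (1 + Q ^ 2 / 4) / m ≤ 1 + Q ^ 2 / 4 := div_le_self (by positivity) hm
  rw [le_div_iff₀' hm0]
  calc m * |phaseDeviation Q m ξ| = |(m * phaseDeviation Q m ξ + 2 * ξ) - 2 * ξ| := by
        rw [add_sub_cancel_right, abs_mul, abs_of_pos hm0]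
    _ ≤ |m * phaseDeviation Q m ξ + 2 * ξ| + |2 * ξ| := abs_sub _ _
    _ ≤ 3 + Q ^ 2 / 4 := by rw [abs_mul, abs_two]; linarith

theorem abs_sq_mul_sq_phaseDeviation_sub_le (hm : 1 ≤ m) (hξ : |ξ| ≤ 1) :
    |m ^ 2 * phaseDeviation Q m ξ ^ 2 - 4 * ξ ^ 2|
      ≤ (1 + Q ^ 2 / 4) * (5 + Q ^ 2 / 4) / m := by
  have hr := abs_mul_phaseDeviation_add_le (Q := Q) hm hξ
  set r := m * phaseDeviation Q m ξ + 2 * ξ with hr_def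
  have hr' : |r - 4 * ξ| ≤ 5 + Q ^ 2 / 4 := by
    have : (1 + Q ^ 2 / 4) / m ≤ 1 + Q ^ 2 / 4 := div_le_self (by positivity) hm
    calc |r - 4 * ξ| ≤ |r| + |4 * ξ| := abs_sub _ _
      _ ≤ 5 + Q ^ 2 / 4 := by rw [abs_mul, abs_of_pos (by norm_num : (0 : ℝ) < 4)]; linarith
  calc |m ^ 2 * phaseDeviation Q m ξ ^ 2 - 4 * ξ ^ 2| = |r| * |r - 4 * ξ| := by
        rw [← abs_mul, hr_def]; ring_nf
    _ ≤ (1 + Q ^ 2 / 4) / m * (5 + Q ^ 2 / 4) := by gcongr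
    _ = (1 + Q ^ 2 / 4) * (5 + Q ^ 2 / 4) / m := by ring

end PhaseDeviation

theorem pow_four_mul_rpow_half {m y : ℝ} (hm : 0 < m) (hy : 0 ≤ y) (a : ℝ) :
    (m ^ 4 * y) ^ (a / 2) = (m ^ 2) ^ (a - 1) * m ^ 2 * y ^ (a / 2) := by
  have hm2 : 0 < m ^ 2 := by positivity
  rw [mul_rpow (by positivity) hy, show m ^ 4 = (m ^ 2) ^ (2 : ℝ) by norm_cast; ring,
    ← rpow_mul hm2.le, ← rpow_add_one hm2.ne']
  ring_nf

theorem phase_eq_quadratic_add_remainder {a Q s m ξ : ℝ} (ha : a ≠ 0) (hm : 0 < m) :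
    m * ξ * s - m ^ 2 * s
        + s / (a * (m ^ 2) ^ (a - 1)) * ((m ^ 2 - m * ξ) ^ 2 + Q ^ 2 / 4) ^ (a / 2)
      = (a - 1) / 2 * s * ξ ^ 2 + ((s / a - s) * m ^ 2 + s * Q ^ 2 / (8 * m ^ 2))
        + (s * (a - 2) / 8 * (m ^ 2 * phaseDeviation Q m ξ ^ 2 - 4 * ξ ^ 2)
          + s / a * m ^ 2 * binomialRemainder (a / 2) (phaseDeviation Q m ξ)) := by
  have hbase := sq_sub_add_eq_mul_one_add_phaseDeviation (Q := Q) (ξ := ξ) hm.ne'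
  have hy : 0 ≤ 1 + phaseDeviation Q m ξ := by
    have : 0 ≤ (m ^ 2 - m * ξ) ^ 2 + Q ^ 2 / 4 := by positivity
    rw [hbase] at this
    exact (mul_nonneg_iff_of_pos_left (by positivity)).mp this
  rw [hbase, pow_four_mul_rpow_half hm hy, binomialRemainder]
  unfold phaseDeviation
  field_simp
  ring

theorem abs_phase_error_le {a Q s m ξ K δ : ℝ} (hK : 0 ≤ K)
    (hR : ∀ x, |x| < δ → |binomialRemainder (a / 2) x| ≤ K * |x| ^ 3)
    (hm : 1 ≤ m) (hmδ : (3 + Q ^ 2 / 4) / m < δ) (hξ : |ξ| ≤ 1) :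
    |s * (a - 2) / 8 * (m ^ 2 * phaseDeviation Q m ξ ^ 2 - 4 * ξ ^ 2)
        + s / a * m ^ 2 * binomialRemainder (a / 2) (phaseDeviation Q m ξ)|
      ≤ (|s * (a - 2) / 8| * ((1 + Q ^ 2 / 4) * (5 + Q ^ 2 / 4))
          + |s / a| * K * (3 + Q ^ 2 / 4) ^ 3) / m := by
  have hm0 : 0 < m := by linarith
  have hx := abs_phaseDeviation_le (Q := Q) hm hξ
  have hrem : |binomialRemainder (a / 2) (phaseDeviation Q m ξ)|
      ≤ K * ((3 + Q ^ 2 / 4) / m) ^ 3 :=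
    (hR _ (hx.trans_lt hmδ)).trans (by gcongr)
  calc _ ≤ |s * (a - 2) / 8| * |m ^ 2 * phaseDeviation Q m ξ ^ 2 - 4 * ξ ^ 2|
        + |s / a| * m ^ 2 * |binomialRemainder (a / 2) (phaseDeviation Q m ξ)| := by
        refine (abs_add_le _ _).trans_eq ?_
        rw [abs_mul, abs_mul, abs_mul, abs_of_pos (by positivity : 0 < m ^ 2)]
    _ ≤ |s * (a - 2) / 8| * ((1 + Q ^ 2 / 4) * (5 + Q ^ 2 / 4) / m)
        + |s / a| * m ^ 2 * (K * ((3 + Q ^ 2 / 4) / m) ^ 3) := by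
        gcongr
        exact abs_sq_mul_sq_phaseDeviation_sub_le hm hξ
    _ = _ := by
        field_simp

theorem phase_quadratic_expansion_general (a Q s : ℝ) (ha : 1 < a) :
    ∃ C > (0 : ℝ), ∃ N₀ : ℕ, ∀ N : ℕ, N₀ ≤ N → ∃ cN : ℝ,
      ∀ ξ ∈ Set.Icc (-1 : ℝ) 1,
        |(Real.sqrt N * ξ * s - N * s +
            (s / (a * (N : ℝ) ^ (a - 1))) *
              (((N : ℝ) - Real.sqrt N * ξ) ^ 2 + Q ^ 2 / 4) ^ (a / 2))
          - (((a - 1) / 2) * s * ξ ^ 2 + cN)| ≤ C * (N : ℝ) ^ (-(1 / 2) : ℝ) := by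
  obtain ⟨K, δ, hK, hδ, hR⟩ := exists_abs_binomialRemainder_le (a / 2)
  set C₀ := |s * (a - 2) / 8| * ((1 + Q ^ 2 / 4) * (5 + Q ^ 2 / 4))
    + |s / a| * K * (3 + Q ^ 2 / 4) ^ 3
  refine ⟨C₀ + 1, by positivity, ⌈((3 + Q ^ 2 / 4) / δ) ^ 2⌉₊ + 1, fun N hN₀ => ?_⟩
  have hN : ((3 + Q ^ 2 / 4) / δ) ^ 2 < N := by
    have := Nat.lt_of_ceil_lt (Nat.lt_of_lt_of_le (Nat.lt_succ_self _) hN₀)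
    exact_mod_cast this
  rw [rpow_neg N.cast_nonneg, ← sqrt_eq_rpow]
  set m := √(N : ℝ)
  have hNm : (N : ℝ) = m ^ 2 := (sq_sqrt N.cast_nonneg).symm
  have hm : 1 ≤ m := one_le_sqrt.mpr (by exact_mod_cast Nat.one_le_of_lt hN₀)
  have hmδ : (3 + Q ^ 2 / 4) / m < δ := by
    rw [div_lt_iff₀ (by linarith), ← div_lt_iff₀' hδ]
    exact lt_sqrt_of_sq_lt hN
  refine ⟨(s / a - s) * m ^ 2 + s * Q ^ 2 / (8 * m ^ 2), fun ξ hξ => ?_⟩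
  rw [hNm, phase_eq_quadratic_add_remainder (by linarith) (by linarith), add_sub_cancel_left]
  refine (abs_phase_error_le hK hR hm hmδ (abs_le.mpr hξ)).trans ?_
  rw [div_eq_mul_inv]
  exact mul_le_mul_of_nonneg_right (le_add_of_nonneg_right zero_le_one) (by positivity)

theorem phase_quadratic_expansion (a Q s : ℝ) (ha : 1 < a) (hQ : 0 < Q) (hs : 0 < s) :
    ∃ C > (0 : ℝ), ∃ N₀ : ℕ, ∀ N : ℕ, N₀ ≤ N → ∃ cN : ℝ,
      ∀ ξ ∈ Set.Icc (-1 : ℝ) 1,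
        |(Real.sqrt N * ξ * s - N * s +
            (s / (a * (N : ℝ) ^ (a - 1))) *
              (((N : ℝ) - Real.sqrt N * ξ) ^ 2 + Q ^ 2 / 4) ^ (a / 2))
          - (((a - 1) / 2) * s * ξ ^ 2 + cN)| ≤ C * (N : ℝ) ^ (-(1 / 2) : ℝ) :=
  phase_quadratic_expansion_general a Q s ha
end

section
/- Fix a > 1, Q > 0, ε ∈ (0,1), and s ∈ [ε, 2ε]. For N ∈ ℕ, ξ ∈ [−1,1], and t_N = s/(a·N^{a−1}), define θ(ξ) = −N^{1/2}·s·ξ + N·s + t_N·((N − N^{1/2}ξ)² + Q²/4)^{a/2}. Then |θ'(ξ)| ≥ ε·N^{1/2} for all ξ ∈ [−1,1] and all N ≥ 2. -/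
/-!
Differentiating the phase gives `θ'(ξ) = -√N (s + t a (N - √N ξ) ((N - √N ξ)² + Q²/4)^(a/2 - 1))`.
For `ξ ≤ 1` and `N ≥ 1` we have `√N ξ ≤ √N ≤ N`, so every term of the bracket after `s` is
nonnegative and the bracket is at least `s ≥ ε`.
-/

open Real

theorem hasDerivAt_phase (a c s t M q x : ℝ) (hq : 0 < q) :
    HasDerivAt (fun x : ℝ => -c * s * x + M * s + t * ((M - c * x) ^ 2 + q) ^ (a / 2))
      (-(c * (s + t * a * (M - c * x) * ((M - c * x) ^ 2 + q) ^ (a / 2 - 1)))) x := by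
  have hlin : HasDerivAt (fun x : ℝ => M - c * x) (-c) x := by
    simpa using ((hasDerivAt_id x).const_mul c).const_sub M
  have hbase : HasDerivAt (fun x : ℝ => (M - c * x) ^ 2 + q) (2 * (M - c * x) * (-c)) x := by
    simpa using (hlin.pow 2).add_const q
  have hpow := hbase.rpow_const (p := a / 2) (Or.inl (by positivity))
  exact ((((hasDerivAt_id x).const_mul (-c * s)).add_const (M * s)).add
    (hpow.const_mul t)).congr_deriv (by ring)

theorem sqrt_mul_le_self {M ξ : ℝ} (hM : 1 ≤ M) (hξ : ξ ≤ 1) : √M * ξ ≤ M :=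
  calc √M * ξ ≤ √M * 1 := mul_le_mul_of_nonneg_left hξ (sqrt_nonneg M)
    _ = √M := mul_one _
    _ ≤ M := sqrt_le_self_iff.mpr (Or.inr hM)

theorem nonstationary_phase_first_derivative_general (a Q ε s : ℝ) (ha : 1 < a) (hQ : 0 < Q)
    (hε0 : 0 < ε) (hs : s ∈ Set.Icc ε (2 * ε)) :
    ∀ N : ℕ, 2 ≤ N → ∀ ξ ∈ Set.Icc (-1 : ℝ) 1,
      ε * Real.sqrt N ≤
        |deriv (fun x : ℝ => -Real.sqrt N * s * x + N * s +
          (s / (a * (N : ℝ) ^ (a - 1))) *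
            (((N : ℝ) - Real.sqrt N * x) ^ 2 + Q ^ 2 / 4) ^ (a / 2)) ξ| := by
  intro N hN ξ hξ
  have hN1 : (1 : ℝ) ≤ N := by exact_mod_cast one_le_two.trans hN
  have ha0 : 0 < a := one_pos.trans ha
  have hs0 : 0 < s := hε0.trans_le hs.1
  have hgap : 0 ≤ (N : ℝ) - √N * ξ := sub_nonneg.2 (sqrt_mul_le_self hN1 hξ.2)
  have hbracket : ε ≤ s + s / (a * (N : ℝ) ^ (a - 1)) * a * ((N : ℝ) - √N * ξ) *
      (((N : ℝ) - √N * ξ) ^ 2 + Q ^ 2 / 4) ^ (a / 2 - 1) :=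
    hs.1.trans (le_add_of_nonneg_right (by positivity))
  rw [(hasDerivAt_phase a _ s _ _ _ ξ (by positivity)).deriv, abs_neg, abs_mul,
    abs_of_nonneg (sqrt_nonneg _), mul_comm]
  exact mul_le_mul_of_nonneg_left (hbracket.trans (le_abs_self _)) (sqrt_nonneg _)

theorem nonstationary_phase_first_derivative (a Q ε s : ℝ) (ha : 1 < a) (hQ : 0 < Q)
    (hε0 : 0 < ε) (hε1 : ε < 1) (hs : s ∈ Set.Icc ε (2 * ε)) :
    ∀ N : ℕ, 2 ≤ N → ∀ ξ ∈ Set.Icc (-1 : ℝ) 1,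
      ε * Real.sqrt N ≤
        |deriv (fun x : ℝ => -Real.sqrt N * s * x + N * s +
          (s / (a * (N : ℝ) ^ (a - 1))) *
            (((N : ℝ) - Real.sqrt N * x) ^ 2 + Q ^ 2 / 4) ^ (a / 2)) ξ| :=
  nonstationary_phase_first_derivative_general a Q ε s ha hQ hε0 hs
end
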